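/- The actions e₁^{τ} and e₂^{σ}, where e₂^σ(a,b,c,d) = (σa(a+d)/(σa+d), σ⁻¹b(σa+d)/(a+d), c(σa+d)/(a+d), d(a+d)/(σa+d)), commute: e₁^τ(e₂^σ(x)) = e₂^σ(e₁^τ(x)) wherever defined. -/

import Mathlib

def e1 {F : Type*} [Field F] (τ : F) (p : F × F × F × F) : F × F × F × F :=
  let (a, b, c, d) := p
  (τ * a * (a + d) / (τ * a + d), b * (τ * a + d) / (a + d),
   τ⁻¹ * c * (τ * a + d) / (a + d), d * (a + d) / (τ * a + d))

def e2 {F : Type*} [Field F] (σ : F) (p : F × F × F × F) : F × F × F × F :=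
  let (a, b, c, d) := p
  (σ * a * (a + d) / (σ * a + d), σ⁻¹ * b * (σ * a + d) / (a + d),
   c * (σ * a + d) / (a + d), d * (a + d) / (σ * a + d))

/-!
Both actions send `(a, d)` to `(a', d') = (σa, d) · (a + d)/(σa + d)`, so `a' + d' = a + d` and
`τa' + d' = (τσa + d)(a + d)/(σa + d)`. Substituting this into the other action, the factors
`(σa + d)` cancel, and both composites come out as the same closed form `e12 τ σ`.
-/

def e12 {F : Type*} [Field F] (τ σ : F) (p : F × F × F × F) : F × F × F × F :=
  let (a, b, c, d) := p
  (τ * σ * a * (a + d) / (τ * σ * a + d), σ⁻¹ * b * (τ * σ * a + d) / (a + d),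
   τ⁻¹ * c * (τ * σ * a + d) / (a + d), d * (a + d) / (τ * σ * a + d))

section

variable {F : Type*} [Field F]

lemma sum_rescaled (σ a d : F) (h : σ * a + d ≠ 0) :
    σ * a * (a + d) / (σ * a + d) + d * (a + d) / (σ * a + d) = a + d := by
  field_simp

lemma weighted_sum_rescaled (t σ a d : F) (h : σ * a + d ≠ 0) :
    t * (σ * a * (a + d) / (σ * a + d)) + d * (a + d) / (σ * a + d)
      = (t * σ * a + d) * (a + d) / (σ * a + d) := by
  field_simp

lemma div_mul_div_div_cancel (x u s w : F) (hs : s ≠ 0) (hu : u ≠ 0) :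
    x / u * s / (w * s / u) = x / w := by
  rw [div_mul_eq_mul_div, div_div_div_cancel_right₀ hu, mul_div_mul_right _ _ hs]

lemma e1_e2_eq_e12 (τ σ a b c d : F) (had : a + d ≠ 0) (hσad : σ * a + d ≠ 0) :
    e1 τ (e2 σ (a, b, c, d)) = e12 τ σ (a, b, c, d) := by
  simp only [e1, e2, e12, sum_rescaled σ a d hσad, weighted_sum_rescaled τ σ a d hσad]
  simp only [mul_div_assoc', div_mul_div_div_cancel _ _ _ _ had hσad]
  ext <;> field_simp

lemma e2_e1_eq_e12 (τ σ a b c d : F) (had : a + d ≠ 0) (hτad : τ * a + d ≠ 0) :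
    e2 σ (e1 τ (a, b, c, d)) = e12 τ σ (a, b, c, d) := by
  simp only [e1, e2, e12, sum_rescaled τ a d hτad, weighted_sum_rescaled σ τ a d hτad,
    mul_comm σ τ]
  simp only [mul_div_assoc', div_mul_div_div_cancel _ _ _ _ had hτad]
  ext <;> field_simp

end

theorem e1_e2_commute_general {F : Type*} [Field F] (τ σ a b c d : F)
    (had : a + d ≠ 0) (hτad : τ * a + d ≠ 0) (hσad : σ * a + d ≠ 0) :
    e1 τ (e2 σ (a, b, c, d)) = e2 σ (e1 τ (a, b, c, d)) := by
  rw [e1_e2_eq_e12 τ σ a b c d had hσad, e2_e1_eq_e12 τ σ a b c d had hτad]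

/-- The actions e₁ and e₂ commute wherever defined. -/
theorem e1_e2_commute {F : Type*} [Field F] (τ σ a b c d : F)
    (hτ : τ ≠ 0) (hσ : σ ≠ 0)
    (had : a + d ≠ 0) (hτad : τ * a + d ≠ 0) (hσad : σ * a + d ≠ 0)
    (hτσad : τ * σ * a + d ≠ 0) (hστad : σ * τ * a + d ≠ 0) :
    e1 τ (e2 σ (a, b, c, d)) = e2 σ (e1 τ (a, b, c, d)) :=
  e1_e2_commute_general τ σ a b c d had hτad hσad
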